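/- Let (R, m) be a commutative Noetherian local ring and let M be a complete R-module. Then the intersection of all associated primes of M equals the radical of the annihilator of M, i.e. ⋂ Ass(M) = √(Ann_R(M)). -/

import Mathlib

open IsLocalRing

universe u v

/-!
Every associated prime contains `Ann M`, which gives `⊇`. Conversely, let `x` lie in every associated
prime of `M`. The associated primes of a cyclic submodule `R ∙ m` are associated primes of `M`, and
for a finite module they include the minimal primes of the annihilator, so `x` is nilpotent on
every `R ∙ m`: `x` acts locally nilpotently on `M`. If `M ≠ 0` then `x ∈ 𝔪`, and completeness
upgrades local nilpotence to nilpotence by Baire's theorem: `M` is the countable union of the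
`𝔪`-adically closed submodules `ker xⁿ`, so one of them contains some `𝔪ᵏ M`, and `x ^ (k + n)`
kills `M`.
-/

section AssociatedPrimes

variable {R : Type*} [CommRing R] {M : Type*} [AddCommGroup M] [Module R M]

theorem radical_annihilator_le_sInf_associatedPrimes :
    (Module.annihilator R M).radical ≤ sInf (associatedPrimes R M) :=
  le_sInf fun _ hp ↦ (hp.isPrime.radical_le_iff).mpr
    (Submodule.annihilator_top (R := R) (M := M) ▸ hp.annihilator_le)

variable [IsNoetherianRing R]

theorem sInf_associatedPrimes_eq_radical_annihilator_of_finite [Module.Finite R M] :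
    sInf (associatedPrimes R M) = (Module.annihilator R M).radical :=
  le_antisymm
    ((sInf_le_sInf
      (Module.associatedPrimes.minimalPrimes_annihilator_subset_associatedPrimes R M)).trans_eq
      (Module.annihilator R M).sInf_minimalPrimes)
    radical_annihilator_le_sInf_associatedPrimes

theorem exists_pow_smul_eq_zero_of_mem_sInf_associatedPrimes {x : R}
    (hx : x ∈ sInf (associatedPrimes R M)) (m : M) : ∃ n : ℕ, x ^ n • m = 0 := by
  let N := R ∙ m
  have hxN : x ∈ (Module.annihilator R N).radical := by
    rw [← sInf_associatedPrimes_eq_radical_annihilator_of_finite]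
    exact sInf_le_sInf (associatedPrimes.subset_of_injective N.injective_subtype) hx
  obtain ⟨n, hn⟩ := hxN
  exact ⟨n, congrArg Subtype.val
    (Module.mem_annihilator.mp hn ⟨m, Submodule.mem_span_singleton_self m⟩)⟩

end AssociatedPrimes

section Adic

variable {R : Type*} [CommRing R] {M : Type*} [AddCommGroup M] [Module R M] {I : Ideal R}

theorem LinearMap.iInf_ker_sup_pow_smul_top_le {N : Type*} [AddCommGroup N] [Module R N]
    [IsHausdorff I N] (f : M →ₗ[R] N) :
    ⨅ k : ℕ, (LinearMap.ker f ⊔ I ^ k • ⊤) ≤ LinearMap.ker f := fun y hy ↦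
  IsHausdorff.haus ‹_› (f y) fun k ↦ SModEq.zero.mpr <|
    sup_le (Submodule.comap_mono bot_le) (Submodule.smul_top_le_comap_smul_top _ f)
      (Submodule.mem_iInf _ |>.mp hy k)

theorem IsPrecomplete.exists_pow_smul_top_le [IsPrecomplete I M] (K : ℕ → Submodule R M)
    (hK : ∀ n, ⨅ k : ℕ, (K n ⊔ I ^ k • ⊤) ≤ K n) (hcover : ∀ y, ∃ n, y ∈ K n) :
    ∃ n k, I ^ k • (⊤ : Submodule R M) ≤ K n := by
  -- `⨅ k, (K n ⊔ I ^ k • ⊤)` is the `I`-adic closure of `K n`; the proof is the nested-balls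
  -- argument for Baire's theorem, the `n`-th ball `y n + I ^ κ n • ⊤` avoiding `K (n - 1)`.
  by_contra! h
  have step (n : ℕ) (y : M) (k : ℕ) : ∃ y' k', k < k' ∧ y' - y ∈ I ^ k • (⊤ : Submodule R M) ∧
      ∀ w, w - y' ∈ I ^ k' • (⊤ : Submodule R M) → w ∉ K n := by
    obtain ⟨z, hz, hzK⟩ := Set.not_subset.mp (h n k)
    obtain ⟨y', hy'K, hy'⟩ : ∃ y' ∉ K n, y' - y ∈ I ^ k • (⊤ : Submodule R M) := by
      by_cases hy : y ∈ K n
      · exact ⟨y + z, fun hyz ↦ hzK (by simpa using (K n).sub_mem hyz hy), by simpa using hz⟩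
      · exact ⟨y, hy, by simp⟩
    obtain ⟨j, hj⟩ : ∃ j, y' ∉ K n ⊔ I ^ j • ⊤ := by
      by_contra! hall
      exact hy'K (hK n (Submodule.mem_iInf _ |>.mpr hall))
    refine ⟨y', max j (k + 1), by omega, hy', fun w hw hwK ↦ hj ?_⟩
    have hw' := Submodule.pow_smul_top_le I M (le_max_left j (k + 1)) hw
    simpa using Submodule.sub_mem_sup hwK hw'
  choose next depth hdepth hnext hfar using step
  obtain ⟨y, κ, hy, hκ_succ⟩ : ∃ (y : ℕ → M) (κ : ℕ → ℕ),
      (∀ n, y (n + 1) = next n (y n) (κ n)) ∧ ∀ n, κ (n + 1) = depth n (y n) (κ n) := by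
    let seq : ℕ → M × ℕ := fun n ↦
      Nat.rec (0, 0) (fun n p ↦ (next n p.1 p.2, depth n p.1 p.2)) n
    exact ⟨fun n ↦ (seq n).1, fun n ↦ (seq n).2, fun _ ↦ rfl, fun _ ↦ rfl⟩
  have hκ : StrictMono κ := strictMono_nat_of_lt_succ fun n ↦ hκ_succ n ▸ hdepth n (y n) (κ n)
  have hcauchy {a b : ℕ} (hab : a ≤ b) : y b - y a ∈ I ^ κ a • (⊤ : Submodule R M) := by
    induction b, hab using Nat.le_induction with
    | base => simp
    | succ b hab ih =>
      have hb := Submodule.pow_smul_top_le I M (hκ.monotone hab) (hnext b (y b) (κ b))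
      rw [hy]
      simpa using Submodule.add_mem _ hb ih
  obtain ⟨L, hL⟩ := IsPrecomplete.prec ‹_› (f := y) fun {a b} hab ↦ SModEq.sub_mem.mpr <| by
    simpa using Submodule.pow_smul_top_le I M (hκ.id_le a) (Submodule.neg_mem _ (hcauchy hab))
  obtain ⟨n, hn⟩ := hcover L
  refine hfar n (y n) (κ n) L ?_ hn
  rw [← hy, ← hκ_succ]
  have hlim := SModEq.sub_mem.mp (hL (κ (n + 1))).symm
  simpa using Submodule.add_mem _ hlim (hcauchy (hκ.id_le (n + 1)))

theorem mem_radical_annihilator_of_forall_exists_pow_smul_eq_zero [IsPrecomplete I M]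
    [IsHausdorff I M] {x : R} (hx : x ∈ I) (h : ∀ m : M, ∃ n : ℕ, x ^ n • m = 0) :
    x ∈ (Module.annihilator R M).radical := by
  let K (n : ℕ) : Submodule R M := LinearMap.ker (x ^ n • LinearMap.id)
  obtain ⟨n, k, hle⟩ := IsPrecomplete.exists_pow_smul_top_le K
    (fun n ↦ (x ^ n • LinearMap.id).iInf_ker_sup_pow_smul_top_le (I := I)) (by simpa [K] using h)
  refine ⟨k + n, Module.mem_annihilator.mpr fun m ↦ ?_⟩
  have hm : x ^ k • m ∈ K n := hle (Submodule.smul_mem_smul (Ideal.pow_mem_pow hx k) trivial)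
  simpa [K, pow_add, mul_smul] using hm

end Adic

theorem inf_associatedPrimes_eq_radical_annihilator
    (R : Type u) [CommRing R] [IsNoetherianRing R] [IsLocalRing R]
    (M : Type v) [AddCommGroup M] [Module R M]
    [IsAdicComplete (maximalIdeal R) M] :
    sInf (associatedPrimes R M) = (Module.annihilator R M).radical := by
  refine le_antisymm (fun x hx ↦ ?_) radical_annihilator_le_sInf_associatedPrimes
  rcases subsingleton_or_nontrivial M with hM | hM
  · rw [Module.annihilator_eq_top_iff.mpr hM, Ideal.radical_top]
    trivial
  obtain ⟨p, hp⟩ := associatedPrimes.nonempty R M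
  exact mem_radical_annihilator_of_forall_exists_pow_smul_eq_zero
    (le_maximalIdeal hp.isPrime.ne_top (Submodule.mem_sInf.mp hx p hp))
    (exists_pow_smul_eq_zero_of_mem_sInf_associatedPrimes hx)
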